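/- Let 0 < a < 1 and let k be a natural number with k ≥ exp(1/a). Define f_i(t) = i·t − i·a·H_{i−1} for 1 ≤ i ≤ k. Then for every t ≥ 0 there exists i with 1 ≤ i ≤ k such that f_i(t) mod 1 ∈ [0, a]. In other words, at every time at least one of the k runners (with distinct constant integer speeds 1, 2, ..., k) is inside the arc [0, a]. -/

import Mathlib

/-!
The points `a * H i` cut `[0, a * H k)` into consecutive intervals, the `i`-th of length `a / i`,
and `a * H k ≥ a * log (k + 1) > 1` once `k ≥ exp (1 / a)`, so these intervals cover `[0, 1)`.
If `fract t ∈ [a * H (i - 1), a * H i)`, runner `i` sits at `i * (fract t - a * H (i - 1)) mod 1`,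
a point of `[0, a)`.
-/

noncomputable def H (n : ℕ) : ℝ := ∑ i ∈ Finset.range n, 1 / (i + 1 : ℝ)

lemma H_eq_harmonic (n : ℕ) : H n = harmonic n := by
  simp [H, harmonic, one_div]

lemma H_succ (n : ℕ) : H (n + 1) = H n + 1 / (n + 1 : ℕ) := by
  simp [H, Finset.sum_range_succ]

lemma one_lt_mul_H_of_exp_inv_le {a : ℝ} (ha : 0 < a) {k : ℕ} (hk : Real.exp (1 / a) ≤ k) :
    1 < a * H k := by
  have hk_pos : (0 : ℝ) < k := (Real.exp_pos _).trans_le hk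
  have h_inv_lt : 1 / a < H k := calc
    1 / a ≤ Real.log k := (Real.le_log_iff_exp_le hk_pos).mpr hk
    _ < Real.log ↑(k + 1) := Real.log_lt_log hk_pos (by push_cast; linarith)
    _ ≤ H k := H_eq_harmonic k ▸ log_add_one_le_harmonic k
  rwa [div_lt_iff₀' ha] at h_inv_lt

lemma exists_mem_Ico_of_le_of_lt {c : ℕ → ℝ} {s : ℝ} {k : ℕ} (h0 : c 0 ≤ s) (hk : s < c k) :
    ∃ i < k, s ∈ Set.Ico (c i) (c (i + 1)) := by
  classical
  have hex : ∃ j, s < c j := ⟨k, hk⟩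
  obtain ⟨i, hi⟩ : ∃ i, Nat.find hex = i + 1 := by
    refine Nat.exists_eq_succ_of_ne_zero fun h => ?_
    exact (Nat.find_spec hex).not_ge (h ▸ h0)
  refine ⟨i, ?_, not_lt.mp (Nat.find_min hex (by omega)), hi ▸ Nat.find_spec hex⟩
  have := Nat.find_min' hex hk
  omega

lemma fract_natCast_mul_sub (n : ℕ) (t c : ℝ) :
    Int.fract (n * t - n * c) = Int.fract (n * (Int.fract t - c)) := by
  rw [← Int.fract_sub_intCast _ (n * ⌊t⌋)]
  congr 1
  rw [Int.fract]
  push_cast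
  ring

lemma fract_natCast_mul_sub_mem_Icc {n : ℕ} (hn : 0 < n) {a c t : ℝ} (ha : a < 1)
    (hs : Int.fract t ∈ Set.Ico c (c + a / n)) :
    Int.fract (n * t - n * c) ∈ Set.Icc 0 a := by
  have hn' : (0 : ℝ) < n := by exact_mod_cast hn
  have h_nonneg : 0 ≤ n * (Int.fract t - c) := mul_nonneg hn'.le (by linarith [hs.1])
  have h_lt : n * (Int.fract t - c) < a := by
    rw [← lt_div_iff₀' hn']
    linarith [hs.2]
  rw [fract_natCast_mul_sub, Int.fract_eq_self.mpr ⟨h_nonneg, by linarith⟩]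
  exact ⟨h_nonneg, h_lt.le⟩

theorem covering_all_time (a : ℝ) (ha0 : 0 < a) (ha1 : a < 1) (k : ℕ)
    (hk : (k : ℝ) ≥ Real.exp (1 / a)) :
    ∀ t : ℝ, 0 ≤ t → ∃ i : ℕ, 1 ≤ i ∧ i ≤ k ∧
      Int.fract ((i : ℝ) * t - (i : ℝ) * a * H (i - 1)) ∈ Set.Icc 0 a := by
  intro t _
  have h_cover : Int.fract t < a * H k :=
    (Int.fract_lt_one t).trans (one_lt_mul_H_of_exp_inv_le ha0 hk)
  obtain ⟨i, hik, hs⟩ := exists_mem_Ico_of_le_of_lt (c := fun j => a * H j)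
    (by simp [H, Int.fract_nonneg]) h_cover
  refine ⟨i + 1, by omega, hik, ?_⟩
  have h_step : a * H (i + 1) = a * H i + a / (i + 1 : ℕ) := by
    rw [H_succ, mul_add, mul_one_div]
  rw [Nat.add_sub_cancel, mul_assoc]
  exact fract_natCast_mul_sub_mem_Icc i.succ_pos ha1 (h_step ▸ hs)
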